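/- arXiv:2307.09333 — 5 statements merged into one kernel-verified Lean document; each statement's English description precedes it below -/
import Mathlib

section
/- (Isolation Lemma) Let U be a finite set and F a nonempty family of subsets of U. If each u ∈ U independently receives a weight w(u) chosen uniformly at random from {1, ..., N}, then the probability that there is a unique set S' ∈ F of minimum total weight (w isolates F) is at least 1 − |U|/N. -/
/-!
An element `u` is *ambiguous* for a weighting `w` if some minimum-weight member of `F` contains
`u` and another one avoids it; if no element is ambiguous, the minimum-weight member is unique.
Fix the weights off `u`. If `u` is ambiguous then `w u` is forced to be the difference between
the minimum weight of the members avoiding `u` and the minimum of `w (S \ {u})` over the members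
`S` containing `u`, so `u` is ambiguous for at most `N ^ (|U| - 1)` of the `N ^ |U|` weightings.
A union bound over `u` finishes the proof.
-/

open Finset

section

variable {U M : Type*} [AddCommMonoid M] [LinearOrder M]

def IsMinWeight (F : Set (Finset U)) (w : U → M) (S : Finset U) : Prop :=
  S ∈ F ∧ ∀ T ∈ F, ∑ x ∈ S, w x ≤ ∑ x ∈ T, w x

def Isolates (w : U → M) (F : Set (Finset U)) : Prop :=
  ∃! S, IsMinWeight F w S

def IsAmbiguous (F : Set (Finset U)) (w : U → M) (u : U) : Prop :=
  (∃ S, IsMinWeight F w S ∧ u ∈ S) ∧ ∃ T, IsMinWeight F w T ∧ u ∉ T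

theorem exists_isMinWeight [Finite U] {F : Set (Finset U)} (hF : F.Nonempty) (w : U → M) :
    ∃ S, IsMinWeight F w S :=
  let ⟨S, hS, hmin⟩ := Set.exists_min_image F (fun S => ∑ x ∈ S, w x) F.toFinite hF
  ⟨S, hS, hmin⟩

theorem IsMinWeight.eq_of_forall_not_isAmbiguous {F : Set (Finset U)} {w : U → M}
    {S T : Finset U} (hS : IsMinWeight F w S) (hT : IsMinWeight F w T)
    (h : ∀ u, ¬ IsAmbiguous F w u) : S = T := by
  ext u
  constructor
  · exact fun huS => by_contra fun huT => h u ⟨⟨S, hS, huS⟩, T, hT, huT⟩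
  · exact fun huT => by_contra fun huS => h u ⟨⟨T, hT, huT⟩, S, hS, huS⟩

theorem isolates_of_forall_not_isAmbiguous [Finite U] {F : Set (Finset U)} (hF : F.Nonempty)
    {w : U → M} (h : ∀ u, ¬ IsAmbiguous F w u) : Isolates w F :=
  let ⟨S, hS⟩ := exists_isMinWeight hF w
  ⟨S, hS, fun _ hT => hT.eq_of_forall_not_isAmbiguous hS h⟩

section

variable [IsOrderedCancelAddMonoid M] [DecidableEq U]

theorem IsMinWeight.apply_le_of_mem_of_notMem {F : Set (Finset U)} {w w' : U → M} {u : U}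
    {S T' : Finset U} (hS : IsMinWeight F w S) (huS : u ∈ S)
    (hT' : IsMinWeight F w' T') (huT' : u ∉ T') (hww' : ∀ v ≠ u, w v = w' v) :
    w u ≤ w' u := by
  have sum_eq_of_notMem {A : Finset U} (hA : u ∉ A) : ∑ x ∈ A, w x = ∑ x ∈ A, w' x :=
    sum_congr rfl fun x hx => hww' x (ne_of_mem_of_not_mem hx hA)
  refine le_of_add_le_add_right (a := ∑ x ∈ S.erase u, w x) ?_
  calc w u + ∑ x ∈ S.erase u, w x = ∑ x ∈ S, w x := add_sum_erase S w huS
    _ ≤ ∑ x ∈ T', w x := hS.2 T' hT'.1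
    _ = ∑ x ∈ T', w' x := sum_eq_of_notMem huT'
    _ ≤ ∑ x ∈ S, w' x := hT'.2 S hS.1
    _ = w' u + ∑ x ∈ S.erase u, w' x := (add_sum_erase S w' huS).symm
    _ = w' u + ∑ x ∈ S.erase u, w x := by rw [sum_eq_of_notMem (notMem_erase u S)]

theorem IsAmbiguous.eq_of_eqOn_ne {F : Set (Finset U)} {w w' : U → M} {u : U}
    (hw : IsAmbiguous F w u) (hw' : IsAmbiguous F w' u) (hww' : ∀ v ≠ u, w v = w' v) :
    w = w' := by
  obtain ⟨⟨_, hS, huS⟩, _, hT, huT⟩ := hw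
  obtain ⟨⟨_, hS', huS'⟩, _, hT', huT'⟩ := hw'
  funext v
  by_cases hv : v = u
  · subst hv
    exact le_antisymm (hS.apply_le_of_mem_of_notMem huS hT' huT' hww')
      (hS'.apply_le_of_mem_of_notMem huS' hT huT fun v hv => (hww' v hv).symm)
  · exact hww' v hv

end

theorem card_filter_le_pow_of_eqOn_ne [Fintype U] [DecidableEq U] {α : Type*} [Fintype α]
    (P : (U → α) → Prop) [DecidablePred P] (u : U)
    (hP : ∀ w w', P w → P w' → (∀ v ≠ u, w v = w' v) → w = w') :
    #{w | P w} ≤ Fintype.card α ^ (Fintype.card U - 1) := by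
  rw [← Fintype.card_subtype]
  calc Fintype.card {w // P w} ≤ Fintype.card ({v // v ≠ u} → α) :=
        Fintype.card_le_of_injective (fun w v => w.1 v) fun w w' h =>
          Subtype.ext (hP w w' w.2 w'.2 fun v hv => congrFun h ⟨v, hv⟩)
    _ = Fintype.card α ^ (Fintype.card U - 1) := by
        rw [Fintype.card_fun, Fintype.card_subtype_compl, Fintype.card_subtype_eq]

theorem card_filter_not_isolates_le [Fintype U] [DecidableEq U]
    [IsOrderedCancelAddMonoid M] {α : Type*} [Fintype α] {f : α → M}
    (hf : Function.Injective f) {F : Set (Finset U)} (hF : F.Nonempty)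
    [DecidablePred fun w : U → α => Isolates (f ∘ w) F] :
    #{w : U → α | ¬ Isolates (f ∘ w) F} ≤
      Fintype.card U * Fintype.card α ^ (Fintype.card U - 1) := by
  classical
  calc #{w : U → α | ¬ Isolates (f ∘ w) F}
      ≤ #(univ.biUnion fun u => {w : U → α | IsAmbiguous F (f ∘ w) u}) := by
        refine card_le_card fun w hw => ?_
        simp only [mem_filter, mem_univ, true_and, mem_biUnion] at hw ⊢
        by_contra! h
        exact hw (isolates_of_forall_not_isAmbiguous hF h)
    _ ≤ ∑ u, #{w : U → α | IsAmbiguous F (f ∘ w) u} := card_biUnion_le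
    _ ≤ ∑ _u : U, Fintype.card α ^ (Fintype.card U - 1) :=
        sum_le_sum fun u _ => card_filter_le_pow_of_eqOn_ne _ u fun _ _ hw hw' hww' =>
          hf.comp_left (hw.eq_of_eqOn_ne hw' fun v hv => congrArg f (hww' v hv))
    _ = Fintype.card U * Fintype.card α ^ (Fintype.card U - 1) := by
        rw [sum_const, card_univ, smul_eq_mul]

theorem one_sub_card_div_le_card_filter_isolates_div [Fintype U] [DecidableEq U]
    [IsOrderedCancelAddMonoid M] {α : Type*} [Fintype α] [Nonempty α] {f : α → M}
    (hf : Function.Injective f) {F : Set (Finset U)} (hF : F.Nonempty)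
    [DecidablePred fun w : U → α => Isolates (f ∘ w) F] :
    1 - (Fintype.card U : ℚ) / Fintype.card α ≤
      #{w : U → α | Isolates (f ∘ w) F} / (Fintype.card α : ℚ) ^ Fintype.card U := by
  set n := Fintype.card U
  set k := Fintype.card α
  have hbad : (#{w : U → α | ¬ Isolates (f ∘ w) F} : ℚ) ≤ n * k ^ (n - 1) := by
    exact_mod_cast card_filter_not_isolates_le hf hF
  have hsplit : (#{w : U → α | Isolates (f ∘ w) F} : ℚ) +
      #{w : U → α | ¬ Isolates (f ∘ w) F} = k ^ n := by
    rw [← Nat.cast_add, card_filter_add_card_filter_not, card_univ, Fintype.card_fun,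
      Nat.cast_pow]
  have hk : (0 : ℚ) < k := by exact_mod_cast Fintype.card_pos
  have hpow : (n : ℚ) / k * k ^ n = n * k ^ (n - 1) := by
    rcases eq_or_ne n 0 with hn | hn
    · simp [hn]
    · rw [← pow_sub_one_mul hn]
      field_simp
  rw [le_div_iff₀ (by positivity)]
  linarith

end

/-- Isolation Lemma: if each element of a finite universe `U` receives a weight
chosen uniformly and independently at random from `{1, ..., N}`, then for any
nonempty family `F` of subsets of `U`, the probability that there is a unique
member of `F` of minimum total weight is at least `1 - |U| / N`. -/
theorem stmt4 {U : Type*} [Fintype U] (N : ℕ) (hN : 0 < N)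
    (F : Set (Finset U)) (hF : F.Nonempty) :
    (1 : ℚ) - (Fintype.card U : ℚ) / N ≤
      (Nat.card {w : U → ↥(Finset.Icc 1 N) |
          ∃! S', S' ∈ F ∧ ∀ S ∈ F, (∑ u ∈ S', (w u : ℕ)) ≤ ∑ u ∈ S, (w u : ℕ)} : ℚ) /
        (N : ℚ) ^ Fintype.card U := by
  classical
  have : Nonempty ↥(Finset.Icc 1 N) := ⟨⟨1, mem_Icc.mpr ⟨le_rfl, hN⟩⟩⟩
  have h := one_sub_card_div_le_card_filter_isolates_div
    (U := U) (α := ↥(Finset.Icc 1 N)) Subtype.val_injective hF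
  rw [Fintype.card_coe, Nat.card_Icc, Nat.add_sub_cancel, ← Fintype.card_subtype] at h
  rwa [Nat.card_eq_fintype_card]
end

section
/- Let G be a graph, X ⊆ V(G), and P ⊆ X. Let cc(P, G[X]) be the number of connected components of G[X] containing no vertex of P. Then the number of consistent cuts (X_l, X_r) of X in G[X] with P ⊆ X_l equals 2^{cc(P, G[X])}. -/
/-!
A consistent cut is determined by its right side `X_r`, and consistency says exactly that
`X_r` is closed under adjacency in `G[X]`, i.e. a union of connected components of `G[X]`.
The condition `P ⊆ X_l` says that these components avoid `P`, so consistent cuts correspond to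
subsets of the set of components avoiding `P`.
-/

namespace SimpleGraph

variable {W : Type*} {H : SimpleGraph W}

theorem Reachable.mem_of_adj_closed {R : Set W} (hR : ∀ u v, H.Adj u v → u ∈ R → v ∈ R)
    {u v : W} (huv : H.Reachable u v) (hu : u ∈ R) : v ∈ R := by
  obtain ⟨p⟩ := huv
  by_contra hv
  obtain ⟨d, -, hd, hd'⟩ := p.exists_boundary_dart R hu hv
  exact hd' (hR _ _ d.adj hd)

theorem preimage_image_connectedComponentMk_of_adj_closed {R : Set W}
    (hR : ∀ u v, H.Adj u v → u ∈ R → v ∈ R) :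
    H.connectedComponentMk ⁻¹' (H.connectedComponentMk '' R) = R := by
  refine subset_antisymm ?_ (Set.subset_preimage_image _ _)
  rintro v ⟨u, hu, huv⟩
  exact (ConnectedComponent.exact huv).mem_of_adj_closed hR hu

variable (H) in
def adjClosedSetsDisjointEquiv (Q : Set W) :
    {R : Set W // (∀ u v, H.Adj u v → u ∈ R → v ∈ R) ∧ Disjoint R Q} ≃
      𝒫 {c : H.ConnectedComponent | ∀ v, H.connectedComponentMk v = c → v ∉ Q} where
  toFun R := ⟨H.connectedComponentMk '' R.1, by
    rintro _ ⟨u, hu, rfl⟩ v huv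
    exact R.2.2.notMem_of_mem_left
      ((ConnectedComponent.exact huv.symm).mem_of_adj_closed R.2.1 hu)⟩
  invFun T := ⟨H.connectedComponentMk ⁻¹' T.1,
    fun _ _ huv hu => by rwa [Set.mem_preimage, ← ConnectedComponent.sound huv.reachable],
    Set.disjoint_left.2 fun v hv => T.2 hv v rfl⟩
  left_inv R := Subtype.ext (preimage_image_connectedComponentMk_of_adj_closed R.2.1)
  right_inv T := Subtype.ext (Set.image_preimage_eq _ Quot.mk_surjective)

end SimpleGraph

def consistentCutEquiv {V : Type*} (G : SimpleGraph V) (X P : Set V) (hP : P ⊆ X) :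
    {p : Set V × Set V // p.1 ∩ p.2 = ∅ ∧ p.1 ∪ p.2 = X ∧ P ⊆ p.1 ∧
        ∀ u ∈ p.1, ∀ v ∈ p.2, ¬ G.Adj u v} ≃
      {R : Set X // (∀ u v, (G.induce X).Adj u v → u ∈ R → v ∈ R) ∧
        Disjoint R (Subtype.val ⁻¹' P)} where
  toFun p := by
    obtain ⟨⟨L, R⟩, hLR, hX, hPL, hcons⟩ := p
    refine ⟨Subtype.val ⁻¹' R, fun u v huv hu => ?_, Set.disjoint_left.2 fun x hxR hxP => ?_⟩
    · have hv : (v : V) ∈ L ∪ R := hX ▸ v.2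
      exact hv.resolve_left fun hvL => hcons v hvL u hu huv.symm
    · exact (Set.eq_empty_iff_forall_notMem.1 hLR) x ⟨hPL hxP, hxR⟩
  invFun R := by
    refine ⟨(X \ Subtype.val '' R.1, Subtype.val '' R.1), Set.sdiff_inter_self,
      Set.sdiff_union_of_subset (Subtype.coe_image_subset X R.1), fun x hx => ⟨hP hx, ?_⟩, ?_⟩
    · rintro ⟨y, hyR, rfl⟩
      exact R.2.2.notMem_of_mem_left hyR hx
    · rintro u ⟨hu, huR⟩ _ ⟨w, hwR, rfl⟩ huw
      exact huR ⟨⟨u, hu⟩, R.2.1 w ⟨u, hu⟩ huw.symm hwR, rfl⟩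
  left_inv p := by
    obtain ⟨⟨L, R⟩, hLR, rfl, -, -⟩ := p
    ext1
    simp only [Subtype.image_preimage_coe, Set.inter_eq_right.2 Set.subset_union_right,
      Set.union_sdiff_cancel_right hLR.le]
  right_inv R := Subtype.ext (Set.preimage_image_eq _ Subtype.val_injective)

/-- The number of consistent cuts `(X_l, X_r)` of `X` in `G[X]` with `P ⊆ X_l`
equals `2 ^ cc(P, G[X])`, where `cc(P, G[X])` is the number of connected
components of `G[X]` containing no vertex of `P`. -/
theorem stmt5 {V : Type*} [Fintype V] (G : SimpleGraph V) (X P : Set V) (hP : P ⊆ X) :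
    Nat.card {p : Set V × Set V //
        p.1 ∩ p.2 = ∅ ∧ p.1 ∪ p.2 = X ∧ P ⊆ p.1 ∧
        ∀ u ∈ p.1, ∀ v ∈ p.2, ¬ G.Adj u v} =
      2 ^ {c : (G.induce X).ConnectedComponent |
        ∀ v : X, (G.induce X).connectedComponentMk v = c → (v : V) ∉ P}.ncard := by
  rw [Nat.card_congr
      ((consistentCutEquiv G X P hP).trans ((G.induce X).adjClosedSetsDisjointEquiv _)),
    Nat.card_coe_set_eq]
  exact Set.ncard_powerset _
end

section
/- Let G be a graph, X ⊆ V(G), and P ⊆ X. The number of consistent cuts (X_l, X_r) of X in G[X] with P ⊆ X_l is odd if and only if every connected component of G[X] contains at least one vertex of P. -/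
/-- The number of consistent cuts `(X_l, X_r)` of `X` in `G[X]` with `P ⊆ X_l`
is odd if and only if every connected component of `G[X]` contains a vertex of `P`. -/
theorem stmt6 {V : Type*} [Fintype V] (G : SimpleGraph V) (X P : Set V) (hP : P ⊆ X) :
    Odd (Nat.card {p : Set V × Set V //
        p.1 ∩ p.2 = ∅ ∧ p.1 ∪ p.2 = X ∧ P ⊆ p.1 ∧
        ∀ u ∈ p.1, ∀ v ∈ p.2, ¬ G.Adj u v}) ↔
      ∀ c : (G.induce X).ConnectedComponent,
        ∃ v : X, (G.induce X).connectedComponentMk v = c ∧ (v : V) ∈ P := by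
  classical
  set H := G.induce X with hH
  set Pc : H.ConnectedComponent → Prop :=
    fun c => ∃ v : X, H.connectedComponentMk v = c ∧ (v : V) ∈ P with hPc
  -- key: a consistent cut is constant on connected components
  have key : ∀ (A B : Set V), A ∩ B = ∅ → A ∪ B = X →
      (∀ u ∈ A, ∀ v ∈ B, ¬ G.Adj u v) →
      ∀ {u v : X}, H.Reachable u v → ((u : V) ∈ A ↔ (v : V) ∈ A) := by
    intro A B hd hu hc u v hr
    obtain ⟨w⟩ := hr
    induction w with
    | nil => rfl
    | @cons a b c hab _ ih =>
      refine Iff.trans ?_ ih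
      have hGab : G.Adj (a : V) (b : V) := hab
      have hbX : (b : V) ∈ A ∪ B := hu ▸ b.2
      have haX : (a : V) ∈ A ∪ B := hu ▸ a.2
      constructor
      · intro ha
        rcases hbX with hb | hb
        · exact hb
        · exact absurd hGab (hc _ ha _ hb)
      · intro hb
        rcases haX with ha | ha
        · exact ha
        · exact absurd hGab.symm (hc _ hb _ ha)
  -- the cuts are in bijection with `Pc`-respecting boolean functions on components
  have e : {p : Set V × Set V //
        p.1 ∩ p.2 = ∅ ∧ p.1 ∪ p.2 = X ∧ P ⊆ p.1 ∧
        ∀ u ∈ p.1, ∀ v ∈ p.2, ¬ G.Adj u v} ≃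
      {f : H.ConnectedComponent → Bool // ∀ c, Pc c → f c = true} := by
    refine ⟨fun p => ⟨SimpleGraph.ConnectedComponent.lift
        (fun v => decide ((v : V) ∈ p.1.1)) ?_, ?_⟩, fun f =>
        ⟨({v | ∃ h : v ∈ X, f.1 (H.connectedComponentMk ⟨v, h⟩) = true},
          {v | ∃ h : v ∈ X, f.1 (H.connectedComponentMk ⟨v, h⟩) = false}),
          ?_, ?_, ?_, ?_⟩, ?_, ?_⟩
    · intro v w q _
      have := key p.1.1 p.1.2 p.2.1 p.2.2.1 p.2.2.2.2 q.reachable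
      simp [decide_eq_decide, this]
    · rintro c ⟨v, rfl, hvP⟩
      simpa using p.2.2.2.1 hvP
    · ext v
      simp only [Set.mem_inter_iff, Set.mem_setOf_eq, Set.mem_empty_iff_false, iff_false]
      rintro ⟨⟨h1, ht⟩, ⟨h2, hf⟩⟩
      rw [Subsingleton.elim h2 h1] at hf
      simp [ht] at hf
    · ext v
      simp only [Set.mem_union, Set.mem_setOf_eq]
      constructor
      · rintro (⟨h, _⟩ | ⟨h, _⟩) <;> exact h
      · intro hv
        rcases Bool.eq_false_or_eq_true (f.1 (H.connectedComponentMk ⟨v, hv⟩)) with h | h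
        · exact Or.inl ⟨hv, h⟩
        · exact Or.inr ⟨hv, h⟩
    · intro v hv
      exact ⟨hP hv, f.2 _ ⟨⟨v, hP hv⟩, rfl, hv⟩⟩
    · rintro u ⟨hu, hut⟩ v ⟨hv, hvf⟩ hadj
      have : H.Adj ⟨u, hu⟩ ⟨v, hv⟩ := hadj
      have := SimpleGraph.ConnectedComponent.connectedComponentMk_eq_of_adj this
      rw [this, hvf] at hut
      exact absurd hut (by simp)
    · rintro ⟨⟨A, B⟩, hd, hu, hPA, hc⟩
      have hAX : A ⊆ X := hu ▸ Set.subset_union_left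
      have hBX : B ⊆ X := hu ▸ Set.subset_union_right
      have hdisj : ∀ v, v ∈ A → v ∈ B → False := by
        intro v h1 h2
        have : v ∈ A ∩ B := ⟨h1, h2⟩
        simp [hd] at this
      refine Subtype.ext (Prod.ext ?_ ?_) <;> ext v <;>
        simp only [SimpleGraph.ConnectedComponent.lift_mk, Set.mem_setOf_eq,
          decide_eq_true_eq, decide_eq_false_iff_not]
      · exact ⟨fun ⟨h, hv⟩ => hv, fun hv => ⟨hAX hv, hv⟩⟩
      · constructor
        · rintro ⟨h, hv⟩
          have hAB : v ∈ A ∪ B := by rw [hu]; exact h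
          rcases hAB with h' | h'
          · exact absurd h' hv
          · exact h'
        · intro hv
          exact ⟨hBX hv, fun hA => hdisj v hA hv⟩
    · rintro ⟨f, hf⟩
      refine Subtype.ext (funext fun c => ?_)
      induction c using SimpleGraph.ConnectedComponent.ind with
      | _ v =>
        simp only [SimpleGraph.ConnectedComponent.lift_mk]
        have : (⟨(v : V), v.2⟩ : X) = v := rfl
        simp [Set.mem_setOf_eq, this]
  rw [Nat.card_congr e]
  have e2 : {f : H.ConnectedComponent → Bool // ∀ c, Pc c → f c = true} ≃
      ({c : H.ConnectedComponent // ¬ Pc c} → Bool) :=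
    { toFun := fun f c => f.1 c.1
      invFun := fun g => ⟨fun c => if h : Pc c then true else g ⟨c, h⟩,
        fun c hc => by simp [hc]⟩
      left_inv := fun f => Subtype.ext (funext fun c => by
        by_cases h : Pc c
        · simp [h, f.2 c h]
        · simp [h])
      right_inv := fun g => funext fun c => by simp [c.2] }
  rw [Nat.card_congr e2, Nat.card_fun]
  have hB : Nat.card Bool = 2 := by simp [Nat.card_eq_fintype_card]
  rw [hB]
  have h2 : Odd (2 ^ Nat.card {c : H.ConnectedComponent // ¬ Pc c}) ↔
      Nat.card {c : H.ConnectedComponent // ¬ Pc c} = 0 := by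
    constructor
    · intro h
      by_contra hk
      exact (Nat.not_even_iff_odd.mpr h) (Nat.even_pow.mpr ⟨even_two, hk⟩)
    · intro h
      rw [h, pow_zero]
      exact odd_one
  have hfin : Finite {c : H.ConnectedComponent // ¬ Pc c} := by
    have : Finite X := inferInstance
    have h1 : Finite H.ConnectedComponent := Quotient.finite H.reachableSetoid
    infer_instance

  rw [h2, Nat.card_eq_zero, or_iff_left (not_infinite_iff_finite.mpr hfin)]
  simp only [isEmpty_subtype, not_not, hPc]
end

section
/- Let G be a graph containing a vertex u of degree 1 whose unique neighbor is v. If M is a matching of G in which v is matched to some vertex w ≠ u, then M' = (M \ {vw}) ∪ {uv} is a matching of G with |M'| = |M|, and the number of connected components of G[V_{M'}] is at least the number of connected components of G[V_M]. -/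
/-- `M` is a matching of `G`. -/
def IsMatching' {V : Type*} (G : SimpleGraph V) (M : Set (Sym2 V)) : Prop :=
  M ⊆ G.edgeSet ∧ ∀ e ∈ M, ∀ f ∈ M, e ≠ f → ∀ v, v ∈ e → v ∉ f

/-- The set of vertices saturated by `M`. -/
def Vm {V : Type*} (M : Set (Sym2 V)) : Set V := {v | ∃ e ∈ M, v ∈ e}

/-!
Since `u` is pendant and `v` is matched to `w ≠ u`, the vertex `u` is unsaturated, so exchanging
`vw` for `uv` gives a matching of the same size, with `V_M = (V_{M'} \ {u}) ∪ {w}`. Sending `u`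
to `w` and fixing every other vertex is a homomorphism from `G[V_{M'}]` onto `G[V_M]`, because
the only edge at `u` is `uv` and `vw` is an edge. A surjective homomorphism is surjective on
connected components.
-/

namespace SimpleGraph

variable {V W : Type*} {G : SimpleGraph V} {H : SimpleGraph W}

theorem ConnectedComponent.map_surjective_of_surjective (φ : G →g H)
    (hφ : Function.Surjective φ) : Function.Surjective (ConnectedComponent.map φ) := by
  intro C
  induction C using ConnectedComponent.ind with
  | h y =>
    obtain ⟨x, rfl⟩ := hφ y
    exact ⟨G.connectedComponentMk x, rfl⟩

theorem ConnectedComponent.card_le_card_of_surjective [Finite V] (φ : G →g H)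
    (hφ : Function.Surjective φ) :
    Nat.card H.ConnectedComponent ≤ Nat.card G.ConnectedComponent :=
  Nat.card_le_card_of_surjective _ (map_surjective_of_surjective φ hφ)

open Classical in
noncomputable def pendantRetract (S : Set V) {u v w : V} (hdeg : ∀ x, G.Adj u x → x = v)
    (hvw : G.Adj v w) :
    G.induce S →g G.induce (insert w (S \ {u})) where
  toFun x :=
    if h : (x : V) = u then ⟨w, Set.mem_insert w _⟩ else ⟨x, Set.mem_insert_of_mem w ⟨x.2, h⟩⟩
  map_rel' {x y} hxy := by
    have hxy : G.Adj x y := hxy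
    by_cases hx : (x : V) = u
    · have hy : (y : V) = v := hdeg y (hx ▸ hxy)
      rw [dif_pos hx, dif_neg (hx ▸ hxy.ne.symm)]
      exact hy ▸ hvw.symm
    by_cases hy : (y : V) = u
    · have hx' : (x : V) = v := hdeg x (hy ▸ hxy.symm)
      rw [dif_neg hx, dif_pos hy]
      exact hx' ▸ hvw
    rw [dif_neg hx, dif_neg hy]
    exact hxy

theorem pendantRetract_surjective {S : Set V} {u v w : V} (hdeg : ∀ x, G.Adj u x → x = v)
    (hvw : G.Adj v w) (hu : u ∈ S) : Function.Surjective (pendantRetract S hdeg hvw) := by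
  rintro ⟨y, rfl | ⟨hy, hyu⟩⟩
  · exact ⟨⟨u, hu⟩, dif_pos rfl⟩
  · exact ⟨⟨y, hy⟩, dif_neg hyu⟩

theorem card_connectedComponent_induce_pendantRetract_le [Finite V] {S : Set V} {u v w : V}
    (hdeg : ∀ x, G.Adj u x → x = v) (hvw : G.Adj v w) (hu : u ∈ S) :
    Nat.card (G.induce (insert w (S \ {u}))).ConnectedComponent ≤
      Nat.card (G.induce S).ConnectedComponent :=
  ConnectedComponent.card_le_card_of_surjective _ (pendantRetract_surjective hdeg hvw hu)

end SimpleGraph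

section Matching

variable {V : Type*} {G : SimpleGraph V} {M N : Set (Sym2 V)} {e f : Sym2 V} {x : V}

theorem Vm_insert : Vm (insert f M) = {x | x ∈ f} ∪ Vm M := by
  ext x
  simp [Vm]

theorem Vm_mono (hMN : M ⊆ N) : Vm M ⊆ Vm N :=
  fun _ ⟨e, he, hxe⟩ ↦ ⟨e, hMN he, hxe⟩

theorem IsMatching'.subset (hM : IsMatching' G M) (hNM : N ⊆ M) : IsMatching' G N :=
  ⟨hNM.trans hM.1, fun e he f hf ↦ hM.2 e (hNM he) f (hNM hf)⟩

theorem IsMatching'.eq_of_mem (hM : IsMatching' G M) (he : e ∈ M) (hf : f ∈ M) (hxe : x ∈ e)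
    (hxf : x ∈ f) : e = f := by
  by_contra hef
  exact hM.2 e he f hf hef x hxe hxf

theorem IsMatching'.insert (hM : IsMatching' G M) (hf : f ∈ G.edgeSet)
    (hfM : ∀ x ∈ f, x ∉ Vm M) : IsMatching' G (insert f M) := by
  refine ⟨Set.insert_subset hf hM.1, ?_⟩
  rintro e (rfl | he) e' (rfl | he') hee' x hxe hxe'
  · exact hee' rfl
  · exact hfM x hxe ⟨e', he', hxe'⟩
  · exact hfM x hxe' ⟨e, he, hxe⟩
  · exact hM.2 e he e' he' hee' x hxe hxe'

theorem IsMatching'.notMem_Vm_sdiff (hM : IsMatching' G M) (he : e ∈ M) (hxe : x ∈ e) :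
    x ∉ Vm (M \ {e}) := by
  rintro ⟨f, ⟨hf, hfe⟩, hxf⟩
  exact hfe (hM.eq_of_mem hf he hxf hxe)

theorem IsMatching'.pendant_notMem_Vm {u v w : V} (hM : IsMatching' G M)
    (hdeg : ∀ x, G.Adj u x → x = v) (hvw : s(v, w) ∈ M) (hwu : w ≠ u) : u ∉ Vm M := by
  rintro ⟨e, he, hue⟩
  obtain ⟨y, rfl⟩ := Sym2.mem_iff_exists.mp hue
  obtain rfl : y = v := hdeg y (hM.1 he)
  have hvw_eq := hM.eq_of_mem he hvw (Sym2.mem_mk_right u y) (Sym2.mem_mk_left y w)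
  rcases Sym2.eq_iff.mp hvw_eq with ⟨huy, -⟩ | ⟨huw, -⟩
  · exact (hM.1 he).ne huy
  · exact hwu huw.symm

theorem Vm_eq_insert_sdiff_of_exchange {u v w : V}
    (hvw : s(v, w) ∈ M) (huv : u ≠ v) (hu : u ∉ Vm M) :
    Vm M = insert w (Vm (insert s(u, v) (M \ {s(v, w)})) \ {u}) := by
  have hu' : u ∉ Vm (M \ {s(v, w)}) := fun h ↦ hu (Vm_mono Set.sdiff_subset h)
  conv_lhs => rw [← Set.insert_sdiff_self_of_mem hvw]
  rw [Vm_insert, Vm_insert]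
  ext x
  rcases eq_or_ne x u with rfl | hxu
  · simp [Sym2.mem_iff, huv, hu']
  · simp only [Sym2.mem_iff, Set.mem_union, Set.mem_ofPred_eq, Set.mem_insert_iff, Set.mem_sdiff,
      hxu, false_or, Set.mem_singleton_iff, not_false_eq_true, and_true]
    tauto

end Matching

/-- If `u` is a pendant vertex with unique neighbor `v`, and a matching `M`
matches `v` to some `w ≠ u`, then replacing the edge `vw` by `uv` yields a
matching of the same size whose saturated vertices induce at least as many
connected components. -/
theorem stmt13 {V : Type*} [Fintype V] (G : SimpleGraph V) (u v w : V)
    (huv : G.Adj u v) (hdeg : ∀ x, G.Adj u x → x = v)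
    (M : Set (Sym2 V)) (hM : IsMatching' G M) (hwu : w ≠ u) (hvw : s(v, w) ∈ M) :
    IsMatching' G ((M \ {s(v, w)}) ∪ {s(u, v)}) ∧
    ((M \ {s(v, w)}) ∪ {s(u, v)}).ncard = M.ncard ∧
    Nat.card (G.induce (Vm M)).ConnectedComponent ≤
      Nat.card (G.induce (Vm ((M \ {s(v, w)}) ∪ {s(u, v)}))).ConnectedComponent := by
  have hu : u ∉ Vm M := hM.pendant_notMem_Vm hdeg hvw hwu
  rw [Set.union_singleton]
  refine ⟨?_, Set.ncard_exchange (fun h ↦ hu ⟨_, h, Sym2.mem_mk_left u v⟩) hvw, ?_⟩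
  · refine (hM.subset Set.sdiff_subset).insert huv ?_
    simp only [Sym2.mem_iff, forall_eq_or_imp, forall_eq]
    exact ⟨fun h ↦ hu (Vm_mono Set.sdiff_subset h), hM.notMem_Vm_sdiff hvw (Sym2.mem_mk_left v w)⟩
  · rw [Vm_eq_insert_sdiff_of_exchange hvw huv.ne hu]
    exact SimpleGraph.card_connectedComponent_induce_pendantRetract_le hdeg (hM.1 hvw)
      ⟨_, Set.mem_insert _ _, Sym2.mem_mk_left u v⟩
end

section
/- Let G be a bipartite graph with parts V' = {v'_1,...,v'_n} and V'' = {v''_1,...,v''_n} constructed from a graph H on vertices {v_1,...,v_n}, with edges {v'_i v''_i : i ∈ [n]} ∪ {v'_i v''_j, v'_j v''_i : v_i v_j ∈ E(H)}. Then H has an irredundant set of size ℓ if and only if G has an induced matching of size ℓ. -/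
/-- `M` is an induced matching of `G`. -/
def IsInducedMatching {V : Type*} (G : SimpleGraph V) (M : Set (Sym2 V)) : Prop :=
  IsMatching' G M ∧ ∀ u v, u ∈ Vm M → v ∈ Vm M → G.Adj u v → s(u, v) ∈ M

/-- The closed neighborhood `N[T]` of a vertex set `T` in `H`. -/
def closedNbhd {V : Type*} (H : SimpleGraph V) (T : Set V) : Set V :=
  {x | x ∈ T ∨ ∃ v ∈ T, H.Adj v x}

/-- `S` is an irredundant set of `H`: for every `v ∈ S`, `N[S \ {v}] ≠ N[S]`. -/
def Irredundant {V : Type*} (H : SimpleGraph V) (S : Set V) : Prop :=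
  ∀ v ∈ S, closedNbhd H (S \ {v}) ≠ closedNbhd H S

/-- The bipartite graph `G` on two copies `V'` (`Sum.inl`) and `V''` (`Sum.inr`) of
the vertices of `H`, with edges `v'_i v''_i` for all `i` and `v'_i v''_j, v'_j v''_i`
for every edge `v_i v_j` of `H`. -/
def doubled {V : Type*} (H : SimpleGraph V) : SimpleGraph (V ⊕ V) where
  Adj a b :=
    (∃ i j, a = Sum.inl i ∧ b = Sum.inr j ∧ (i = j ∨ H.Adj i j)) ∨
    (∃ i j, a = Sum.inr i ∧ b = Sum.inl j ∧ (j = i ∨ H.Adj j i))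
  symm := by
    constructor
    rintro a b (⟨i, j, rfl, rfl, hij⟩ | ⟨i, j, rfl, rfl, hij⟩)
    · exact Or.inr ⟨j, i, rfl, rfl, hij⟩
    · exact Or.inl ⟨j, i, rfl, rfl, hij⟩
  loopless := by
    constructor
    rintro a (⟨i, j, h1, h2, _⟩ | ⟨i, j, h1, h2, _⟩) <;> rw [h1] at h2 <;> simp_all

section

variable {V : Type*}

theorem IsMatching'.eq_of_mem_of_mem {G : SimpleGraph V} {M : Set (Sym2 V)}
    (hM : IsMatching' G M) {e e' : Sym2 V} (he : e ∈ M) (he' : e' ∈ M) {v : V}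
    (hv : v ∈ e) (hv' : v ∈ e') : e = e' := by
  by_contra hne
  exact hM.2 e he e' he' hne v hv hv'

section ClosedNbhd

variable {H : SimpleGraph V}

theorem mem_closedNbhd {T : Set V} {w : V} :
    w ∈ closedNbhd H T ↔ ∃ u ∈ T, u = w ∨ H.Adj u w := by
  simp only [closedNbhd, Set.mem_ofPred_eq]
  constructor
  · rintro (hw | ⟨u, hu, huw⟩)
    exacts [⟨w, hw, Or.inl rfl⟩, ⟨u, hu, Or.inr huw⟩]
  · rintro ⟨u, hu, rfl | huw⟩
    exacts [Or.inl hu, Or.inr ⟨u, hu, huw⟩]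

theorem closedNbhd_mono {T T' : Set V} (h : T ⊆ T') : closedNbhd H T ⊆ closedNbhd H T' := by
  intro w hw
  obtain ⟨u, hu, huw⟩ := mem_closedNbhd.1 hw
  exact mem_closedNbhd.2 ⟨u, h hu, huw⟩

theorem closedNbhd_diff_singleton_ne_iff {S : Set V} {v : V} (hv : v ∈ S) :
    closedNbhd H (S \ {v}) ≠ closedNbhd H S ↔
      ∃ w, ∀ u ∈ S, (u = w ∨ H.Adj u w) ↔ u = v := by
  rw [Ne, Set.Subset.antisymm_iff, and_iff_right (closedNbhd_mono Set.sdiff_subset),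
    Set.not_subset]
  simp only [mem_closedNbhd, Set.mem_sdiff, Set.mem_singleton_iff]
  constructor
  · rintro ⟨w, ⟨u₀, hu₀, hu₀w⟩, hpriv⟩
    refine ⟨w, fun u hu => ⟨fun huw => by_contra fun huv => hpriv ⟨u, ⟨hu, huv⟩, huw⟩, ?_⟩⟩
    rintro rfl
    by_contra hvw
    exact hpriv ⟨u₀, ⟨hu₀, fun h => hvw (h ▸ hu₀w)⟩, hu₀w⟩
  · rintro ⟨w, hw⟩
    exact ⟨w, ⟨v, hv, (hw v hv).2 rfl⟩, fun ⟨u, ⟨hu, huv⟩, huw⟩ => huv ((hw u hu).1 huw)⟩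

end ClosedNbhd

def IsPrivateNeighborMap (H : SimpleGraph V) (S : Set V) (f : V → V) : Prop :=
  ∀ v ∈ S, ∀ u ∈ S, (u = f v ∨ H.Adj u (f v)) ↔ u = v

theorem irredundant_iff_exists_isPrivateNeighborMap {H : SimpleGraph V} {S : Set V} :
    Irredundant H S ↔ ∃ f, IsPrivateNeighborMap H S f := by
  simp only [Irredundant, IsPrivateNeighborMap]
  constructor
  · intro hS
    have : ∀ v, ∃ w, v ∈ S → ∀ u ∈ S, (u = w ∨ H.Adj u w) ↔ u = v := by
      intro v
      by_cases hv : v ∈ S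
      · obtain ⟨w, hw⟩ := (closedNbhd_diff_singleton_ne_iff hv).1 (hS v hv)
        exact ⟨w, fun _ => hw⟩
      · exact ⟨v, fun h => absurd h hv⟩
    choose f hf using this
    exact ⟨f, hf⟩
  · rintro ⟨f, hf⟩ v hv
    exact (closedNbhd_diff_singleton_ne_iff hv).2 ⟨f v, hf v hv⟩

namespace doubled

variable {H : SimpleGraph V}

@[simp]
theorem adj_inl_inr {a b : V} : (doubled H).Adj (.inl a) (.inr b) ↔ a = b ∨ H.Adj a b := by
  simp [doubled]

@[simp]
theorem not_adj_inl_inl {a b : V} : ¬(doubled H).Adj (.inl a) (.inl b) := by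
  simp [doubled]

@[simp]
theorem not_adj_inr_inr {a b : V} : ¬(doubled H).Adj (.inr a) (.inr b) := by
  simp [doubled]

theorem exists_eq_of_mem_edgeSet {e : Sym2 (V ⊕ V)} (he : e ∈ (doubled H).edgeSet) :
    ∃ a b, e = s(.inl a, .inr b) := by
  induction e using Sym2.ind with
  | _ x y =>
    rcases x with a | a <;> rcases y with b | b
    · simp at he
    · exact ⟨a, b, rfl⟩
    · exact ⟨b, a, Sym2.eq_swap⟩
    · simp at he

end doubled

def crossEdge (f : V → V) (v : V) : Sym2 (V ⊕ V) := s(.inl v, .inr (f v))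

theorem crossEdge_injective (f : V → V) : Function.Injective (crossEdge f) := by
  intro v w h
  exact (by simpa [crossEdge] using h : v = w ∧ f v = f w).1

theorem mem_vm_image_crossEdge {f : V → V} {S : Set V} {x : V ⊕ V} :
    x ∈ Vm (crossEdge f '' S) ↔ ∃ v ∈ S, x = .inl v ∨ x = .inr (f v) := by
  simp [Vm, crossEdge, eq_comm]

theorem isInducedMatching_image_crossEdge_iff {H : SimpleGraph V} {S : Set V} {f : V → V} :
    IsInducedMatching (doubled H) (crossEdge f '' S) ↔ IsPrivateNeighborMap H S f := by
  constructor
  · rintro ⟨hmatch, hinduced⟩ v hv u hu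
    constructor
    · intro huf
      have hmem : s(.inl u, .inr (f v)) ∈ crossEdge f '' S :=
        hinduced _ _ (mem_vm_image_crossEdge.2 ⟨u, hu, .inl rfl⟩)
          (mem_vm_image_crossEdge.2 ⟨v, hv, .inr rfl⟩) (doubled.adj_inl_inr.2 huf)
      have := hmatch.eq_of_mem_of_mem hmem (Set.mem_image_of_mem _ hv)
        (Sym2.mem_mk_right _ _) (Sym2.mem_mk_right _ _)
      simpa [crossEdge] using this
    · rintro rfl
      exact doubled.adj_inl_inr.1 (hmatch.1 (Set.mem_image_of_mem _ hu))
  · intro hf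
    refine ⟨⟨?_, ?_⟩, ?_⟩
    · rintro _ ⟨v, hv, rfl⟩
      exact doubled.adj_inl_inr.2 ((hf v hv v hv).2 rfl)
    · rintro _ ⟨v, hv, rfl⟩ _ ⟨w, hw, rfl⟩ hne x hxv hxw
      have hvw : v ≠ w := fun h => hne (h ▸ rfl)
      simp only [crossEdge, Sym2.mem_iff] at hxv hxw
      rcases hxv with rfl | rfl <;> rcases hxw with h | h
      · exact hvw (Sum.inl_injective h)
      · exact Sum.inl_ne_inr h
      · exact Sum.inr_ne_inl h
      · exact hvw ((hf w hw v hv).1 (Sum.inr_injective h ▸ (hf v hv v hv).2 rfl))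
    · intro x y hx hy hxy
      obtain ⟨a, ha, rfl | rfl⟩ := mem_vm_image_crossEdge.1 hx <;>
        obtain ⟨b, hb, rfl | rfl⟩ := mem_vm_image_crossEdge.1 hy
      · exact absurd hxy doubled.not_adj_inl_inl
      · obtain rfl := (hf b hb a ha).1 (doubled.adj_inl_inr.1 hxy)
        exact Set.mem_image_of_mem _ hb
      · obtain rfl := (hf a ha b hb).1 (doubled.adj_inl_inr.1 hxy.symm)
        rw [Sym2.eq_swap]
        exact Set.mem_image_of_mem _ ha
      · exact absurd hxy doubled.not_adj_inr_inr

theorem exists_eq_image_crossEdge {H : SimpleGraph V} {M : Set (Sym2 (V ⊕ V))}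
    (hM : IsMatching' (doubled H) M) : ∃ S f, M = crossEdge f '' S := by
  have : ∀ a, ∃ b', (∃ b, s(.inl a, .inr b) ∈ M) → s(.inl a, .inr b') ∈ M := by
    intro a
    by_cases ha : ∃ b, s(.inl a, .inr b) ∈ M
    exacts [⟨ha.choose, fun _ => ha.choose_spec⟩, ⟨a, fun h => absurd h ha⟩]
  choose f hf using this
  refine ⟨{a | ∃ b, s(.inl a, .inr b) ∈ M}, f, ?_⟩
  ext e
  constructor
  · intro he
    obtain ⟨a, b, rfl⟩ := doubled.exists_eq_of_mem_edgeSet (hM.1 he)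
    exact ⟨a, ⟨b, he⟩, hM.eq_of_mem_of_mem (hf a ⟨b, he⟩) he
      (Sym2.mem_mk_left _ _) (Sym2.mem_mk_left _ _)⟩
  · rintro ⟨a, ha, rfl⟩
    exact hf a ha

end

theorem stmt15_general {V : Type*} (H : SimpleGraph V) (ℓ : ℕ) :
    (∃ S : Set V, Irredundant H S ∧ S.ncard = ℓ) ↔
    (∃ M : Set (Sym2 (V ⊕ V)), IsInducedMatching (doubled H) M ∧ M.ncard = ℓ) := by
  constructor
  · rintro ⟨S, hS, rfl⟩
    obtain ⟨f, hf⟩ := irredundant_iff_exists_isPrivateNeighborMap.1 hS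
    exact ⟨crossEdge f '' S, isInducedMatching_image_crossEdge_iff.2 hf,
      Set.ncard_image_of_injective S (crossEdge_injective f)⟩
  · rintro ⟨M, hM, rfl⟩
    obtain ⟨S, f, rfl⟩ := exists_eq_image_crossEdge hM.1
    exact ⟨S, irredundant_iff_exists_isPrivateNeighborMap.2
      ⟨f, isInducedMatching_image_crossEdge_iff.1 hM⟩,
      (Set.ncard_image_of_injective S (crossEdge_injective f)).symm⟩

/-- `H` has an irredundant set of size `ℓ` iff the doubled bipartite graph has an
induced matching of size `ℓ`. -/
theorem stmt15 {V : Type*} [Fintype V] (H : SimpleGraph V) (ℓ : ℕ) :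
    (∃ S : Set V, Irredundant H S ∧ S.ncard = ℓ) ↔
    (∃ M : Set (Sym2 (V ⊕ V)), IsInducedMatching (doubled H) M ∧ M.ncard = ℓ) :=
  stmt15_general H ℓ
end
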